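/- Let K ∈ 𝓢(ℝⁿ), 0 < ε < 1, and let U be a neighborhood of 0 in ℝⁿ with ‖osc_U K‖_{L¹} ≤ ε. Let Γ ⊂ ℝⁿ be a regular sampling set with a Γ-tile W ⊆ U. Then for every bounded continuous function f on ℝⁿ satisfying f(x) = (f * K)(x) for all x, one has (1−ε)·sup_{x∈ℝⁿ}|f(x)| ≤ sup_{γ∈Γ}|f(γ)| ≤ (1+ε)·sup_{x∈ℝⁿ}|f(x)|. -/

import Mathlib

/-!
Subtracting the reproducing formula at `x` from the one at `x + w` gives
`|f(x + w) - f(x)| ≤ ‖f‖_∞ ∫ |K(t) - K(t - w)| dt ≤ ε ‖f‖_∞` for `w ∈ U`, so on each tile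
`γ + W` we have `|f| ≤ |f(γ)| + ε ‖f‖_∞`. The tiles cover `ℝⁿ` up to a null set and `|f|` is
continuous, hence `‖f‖_∞ ≤ sup_Γ |f| + ε ‖f‖_∞`; the upper bound `sup_Γ |f| ≤ ‖f‖_∞` is trivial.
-/

open MeasureTheory
open scoped ENNReal

/-- Convolution `(f * g)(x) = ∫ f(y) g(x − y) dy` on `ℝⁿ`. -/
noncomputable def conv (n : ℕ) (f g : EuclideanSpace ℝ (Fin n) → ℂ) :
    EuclideanSpace ℝ (Fin n) → ℂ :=
  fun x => ∫ y, f y * g (x - y)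

/-- `Γ` is a regular sampling set of `ℝⁿ` with `Γ`-tile `W`: `Γ` is countable, `W` is a
relatively compact (= bounded) Borel neighborhood of `0`, the translates `γ + W` cover
`ℝⁿ` up to a null set, and any two distinct translates overlap in a null set. -/
def IsRegSampling (n : ℕ) (Γ W : Set (EuclideanSpace ℝ (Fin n))) : Prop :=
  Γ.Countable ∧ MeasurableSet W ∧ W ∈ nhds (0 : EuclideanSpace ℝ (Fin n)) ∧
    Bornology.IsBounded W ∧
    volume ((Set.univ : Set (EuclideanSpace ℝ (Fin n))) \ ⋃ γ ∈ Γ, (γ + ·) '' W) = 0 ∧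
    Γ.Pairwise fun γ γ' => volume (((γ + ·) '' W) ∩ ((γ' + ·) '' W)) = 0

open Set

/-- The oscillation `osc_U K` of the paper, valued in `ℝ≥0∞` so that its integral is always
defined. -/
noncomputable def osc {G E : Type*} [Sub G] [SeminormedAddGroup E] (U : Set G)
    (K : G → E) (x : G) : ℝ≥0∞ :=
  ⨆ y ∈ U, (‖K x - K (x - y)‖₊ : ℝ≥0∞)

theorem integral_norm_sub_translate_le_of_lintegral_osc_le {G E : Type*} [Sub G]
    [MeasurableSpace G] [NormedAddCommGroup E] {μ : Measure G} {U : Set G} {K : G → E}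
    {w : G} {ε : ℝ} (hK : AEStronglyMeasurable (fun t => K t - K (t - w)) μ) (hw : w ∈ U)
    (hε : 0 ≤ ε) (hosc : ∫⁻ x, osc U K x ∂μ ≤ ENNReal.ofReal ε) :
    ∫ t, ‖K t - K (t - w)‖ ∂μ ≤ ε := by
  rw [integral_norm_eq_lintegral_enorm hK]
  refine ENNReal.toReal_le_of_le_ofReal hε (le_trans (lintegral_mono fun t => ?_) hosc)
  exact le_biSup (fun y => (‖K t - K (t - y)‖₊ : ℝ≥0∞)) hw

section Reproducing

variable {G 𝕜 : Type*} [AddCommGroup G] [MeasurableSpace G] [MeasurableAdd G] [MeasurableNeg G]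
  {μ : Measure G} [μ.IsAddLeftInvariant] [μ.IsNegInvariant] [NormedRing 𝕜] [NormedSpace ℝ 𝕜]
  {f K : G → 𝕜} {S : ℝ}

theorem norm_sub_le_mul_integral_norm_sub_translate
    (hrep : ∀ x, f x = ∫ y, f y * K (x - y) ∂μ) (hf : AEStronglyMeasurable f μ)
    (hfS : ∀ y, ‖f y‖ ≤ S) (hK : Integrable K μ) (x w : G) :
    ‖f (x + w) - f x‖ ≤ S * ∫ t, ‖K t - K (t - w)‖ ∂μ := by
  have hfK : ∀ z, Integrable (fun y => f y * K (z - y)) μ := fun z =>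
    (hK.comp_sub_left z).bdd_mul hf (ae_of_all _ hfS)
  have hΔ : Integrable (fun y => K (x + w - y) - K (x - y)) μ :=
    (hK.comp_sub_left _).sub (hK.comp_sub_left x)
  have hdiff : f (x + w) - f x = ∫ y, f y * (K (x + w - y) - K (x - y)) ∂μ := by
    rw [hrep (x + w), hrep x, ← integral_sub (hfK _) (hfK x)]
    simp_rw [mul_sub]
  have hsubst : ∫ y, ‖K (x + w - y) - K (x - y)‖ ∂μ = ∫ t, ‖K t - K (t - w)‖ ∂μ := by
    rw [← integral_sub_left_eq_self (fun t => ‖K t - K (t - w)‖) μ (x + w)]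
    simp only [add_sub_cancel_right, sub_right_comm]
  calc ‖f (x + w) - f x‖ ≤ ∫ y, ‖f y * (K (x + w - y) - K (x - y))‖ ∂μ :=
        hdiff ▸ norm_integral_le_integral_norm _
    _ ≤ ∫ y, S * ‖K (x + w - y) - K (x - y)‖ ∂μ :=
        integral_mono (hΔ.bdd_mul hf (ae_of_all _ hfS)).norm (hΔ.norm.const_mul S) fun y =>
          (norm_mul_le _ _).trans (mul_le_mul_of_nonneg_right (hfS y) (norm_nonneg _))
    _ = S * ∫ t, ‖K t - K (t - w)‖ ∂μ := by rw [integral_const_mul, hsubst]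

theorem norm_translate_le_add_of_lintegral_osc_le {U : Set G} {ε : ℝ}
    (hrep : ∀ x, f x = ∫ y, f y * K (x - y) ∂μ) (hf : AEStronglyMeasurable f μ)
    (hfS : ∀ y, ‖f y‖ ≤ S) (hK : Integrable K μ) (hε : 0 ≤ ε)
    (hosc : ∫⁻ x, osc U K x ∂μ ≤ ENNReal.ofReal ε) (x : G) {w : G} (hw : w ∈ U) :
    ‖f (x + w)‖ ≤ ‖f x‖ + ε * S := by
  have hS : 0 ≤ S := (norm_nonneg _).trans (hfS x)
  have hKw : ∫ t, ‖K t - K (t - w)‖ ∂μ ≤ ε :=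
    integral_norm_sub_translate_le_of_lintegral_osc_le
      (hK.sub (hK.comp_sub_right w)).aestronglyMeasurable hw hε hosc
  calc ‖f (x + w)‖ ≤ ‖f x‖ + ‖f (x + w) - f x‖ := norm_le_norm_add_norm_sub' _ _
    _ ≤ ‖f x‖ + S * ε := by
        gcongr
        exact (norm_sub_le_mul_integral_norm_sub_translate hrep hf hfS hK x w).trans
          (mul_le_mul_of_nonneg_left hKw hS)
    _ = ‖f x‖ + ε * S := by rw [mul_comm]

end Reproducing

theorem iSup_le_iSup_add_of_ae_mem_iUnion_translate {G : Type*} [AddGroup G]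
    [TopologicalSpace G] [MeasurableSpace G] {μ : Measure G} [μ.IsOpenPosMeasure]
    {Γ W : Set G} {g : G → ℝ} {δ : ℝ} (hg : Continuous g) (hbdd : BddAbove (range g))
    (hcover : μ (univ \ ⋃ γ ∈ Γ, (γ + ·) '' W) = 0)
    (hnear : ∀ γ ∈ Γ, ∀ w ∈ W, g (γ + w) ≤ g γ + δ) :
    ⨆ x, g x ≤ (⨆ γ : Γ, g γ) + δ := by
  set T := ⨆ γ : Γ, g γ
  have hbddΓ : BddAbove (range fun γ : Γ => g γ) := hbdd.mono (range_comp_subset_range _ _)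
  have hcov : ∀ᵐ x ∂μ, x ∈ ⋃ γ ∈ Γ, (γ + ·) '' W :=
    mem_ae_iff.2 (by rwa [compl_eq_univ_sdiff])
  have hae : ∀ᵐ x ∂μ, g x ≤ T + δ := hcov.mono fun x hx => by
    simp only [mem_iUnion, mem_image] at hx
    obtain ⟨γ, hγ, w, hw, rfl⟩ := hx
    exact (hnear γ hγ w hw).trans (add_le_add_left (le_ciSup hbddΓ ⟨γ, hγ⟩) δ)
  have hclosure := (μ.dense_of_ae hae).closure_eq
  rw [(isClosed_le hg continuous_const).closure_eq] at hclosure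
  exact ciSup_le fun x => (hclosure ▸ mem_univ x : x ∈ {x | g x ≤ T + δ})

theorem sampling_inequality_Linfty_general (n : ℕ)
    (K : SchwartzMap (EuclideanSpace ℝ (Fin n)) ℂ)
    (ε : ℝ) (hε0 : 0 < ε)
    (U : Set (EuclideanSpace ℝ (Fin n)))
    (hosc : (∫⁻ x, ⨆ y ∈ U, (‖K x - K (x - y)‖₊ : ℝ≥0∞)) ≤ ENNReal.ofReal ε)
    (Γ W : Set (EuclideanSpace ℝ (Fin n))) (hreg : IsRegSampling n Γ W) (hWU : W ⊆ U)
    (f : EuclideanSpace ℝ (Fin n) → ℂ) (hfc : Continuous f)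
    (hfb : ∃ M : ℝ, ∀ x, ‖f x‖ ≤ M)
    (hrep : ∀ x, f x = conv n f (⇑K) x) :
    (1 - ε) * (⨆ x : EuclideanSpace ℝ (Fin n), ‖f x‖) ≤
        (⨆ γ : Γ, ‖f (γ : EuclideanSpace ℝ (Fin n))‖) ∧
      (⨆ γ : Γ, ‖f (γ : EuclideanSpace ℝ (Fin n))‖) ≤
        (1 + ε) * ⨆ x : EuclideanSpace ℝ (Fin n), ‖f x‖ := by
  obtain ⟨M, hM⟩ := hfb
  obtain ⟨-, -, -, -, hcover, -⟩ := hreg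
  have hbdd : BddAbove (range fun x => ‖f x‖) := ⟨M, by rintro _ ⟨x, rfl⟩; exact hM x⟩
  set S := ⨆ x, ‖f x‖
  have hfS : ∀ x, ‖f x‖ ≤ S := le_ciSup hbdd
  have hS : 0 ≤ S := (norm_nonneg _).trans (hfS 0)
  have hnear : ∀ γ ∈ Γ, ∀ w ∈ W, ‖f (γ + w)‖ ≤ ‖f γ‖ + ε * S := fun γ _ w hw =>
    norm_translate_le_add_of_lintegral_osc_le hrep hfc.aestronglyMeasurable hfS K.integrable
      hε0.le hosc γ (hWU hw)
  have hST : S ≤ (⨆ γ : Γ, ‖f γ‖) + ε * S :=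
    iSup_le_iSup_add_of_ae_mem_iUnion_translate hfc.norm hbdd hcover hnear
  have hTS : (⨆ γ : Γ, ‖f γ‖) ≤ S := Real.iSup_le (fun γ => hfS γ) hS
  constructor <;> nlinarith

/-- Proposition 5.6 of Führ–Mayeli (Euclidean case, `p = ∞`): if `f` is bounded,
continuous, and reproduced by convolution with the Schwartz kernel `K`,
`‖osc_U K‖₁ ≤ ε < 1`, and `Γ` is a regular sampling set with a `Γ`-tile `W ⊆ U`, then
`(1−ε)·sup_x |f(x)| ≤ sup_{γ∈Γ} |f(γ)| ≤ (1+ε)·sup_x |f(x)|`. -/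
theorem sampling_inequality_Linfty (n : ℕ)
    (K : SchwartzMap (EuclideanSpace ℝ (Fin n)) ℂ)
    (ε : ℝ) (hε0 : 0 < ε) (hε1 : ε < 1)
    (U : Set (EuclideanSpace ℝ (Fin n))) (hU : U ∈ nhds (0 : EuclideanSpace ℝ (Fin n)))
    (hosc : (∫⁻ x, ⨆ y ∈ U, (‖K x - K (x - y)‖₊ : ℝ≥0∞)) ≤ ENNReal.ofReal ε)
    (Γ W : Set (EuclideanSpace ℝ (Fin n))) (hreg : IsRegSampling n Γ W) (hWU : W ⊆ U)
    (f : EuclideanSpace ℝ (Fin n) → ℂ) (hfc : Continuous f)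
    (hfb : ∃ M : ℝ, ∀ x, ‖f x‖ ≤ M)
    (hrep : ∀ x, f x = conv n f (⇑K) x) :
    (1 - ε) * (⨆ x : EuclideanSpace ℝ (Fin n), ‖f x‖) ≤
        (⨆ γ : Γ, ‖f (γ : EuclideanSpace ℝ (Fin n))‖) ∧
      (⨆ γ : Γ, ‖f (γ : EuclideanSpace ℝ (Fin n))‖) ≤
        (1 + ε) * ⨆ x : EuclideanSpace ℝ (Fin n), ‖f x‖ :=
  sampling_inequality_Linfty_general n K ε hε0 U hosc Γ W hreg hWU f hfc hfb hrep
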